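/- arXiv:1502.07730 — 2 statements merged into one kernel-verified Lean document; each statement's English description precedes it below -/
import Mathlib

section
/- Let n be a positive integer and let w_1 ≤ w_2 ≤ … ≤ w_m be a weighing sequence for n, with partial sums R_i = w_1 + … + w_i. Then for every i with 1 ≤ i ≤ m, one has 3·w_i ≤ 2·R_i + 1 (equivalently w_i ≤ (2R_i + 1)/3). -/
/-!
Write `R` for the sum of the weights before `w i` and `N` for the sum of `w i` and all later
weights, and suppose `w i ≥ 2R + 2`. Weigh `k = N - R - 1`: the early weights contribute at most
`R` in absolute value, so the later ones must contribute between `N - 2R - 1` and `N - 1`. That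
is less than their full sum `N`, so one of them is not placed with coefficient `1`, which costs at
least `w i ≥ 2R + 2`, a contradiction. Hence `w i ≤ 2R + 1`, which is stronger than the claim.
-/

/-- `w 0, w 1, …, w (m-1)` (1-indexed as `w_1 ≤ … ≤ w_m` in the paper) is a
weighing sequence for `n`: a nondecreasing list of `m` positive integers summing
to `n` such that every integer `1 ≤ k ≤ n` can be written as
`k = u_1 w_1 + … + u_m w_m` with each `u_i ∈ {-1, 0, 1}`. -/
def IsWeighingSeq (n m : ℕ) (w : ℕ → ℕ) : Prop :=
  (∀ i, i < m → 0 < w i) ∧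
  (∀ i j, i ≤ j → j < m → w i ≤ w j) ∧
  (∑ i ∈ Finset.range m, w i) = n ∧
  ∀ k : ℤ, 1 ≤ k → k ≤ (n : ℤ) →
    ∃ u : ℕ → ℤ, (∀ i, u i = -1 ∨ u i = 0 ∨ u i = 1) ∧
      k = ∑ i ∈ Finset.range m, u i * (w i : ℤ)

open Finset

section SignedSum

variable {ι α : Type*} [CommRing α] [LinearOrder α] [IsStrictOrderedRing α]
  (s : Finset ι) (u w : ι → α)

theorem abs_sum_mul_le_sum (hu : ∀ j ∈ s, |u j| ≤ 1) (hw : ∀ j ∈ s, 0 ≤ w j) :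
    |∑ j ∈ s, u j * w j| ≤ ∑ j ∈ s, w j :=
  calc |∑ j ∈ s, u j * w j| ≤ ∑ j ∈ s, |u j * w j| := abs_sum_le_sum_abs _ _
    _ ≤ ∑ j ∈ s, w j := sum_le_sum fun j hj => by
        rw [abs_mul, abs_of_nonneg (hw j hj)]
        exact mul_le_of_le_one_left (hw j hj) (hu j hj)

theorem sum_mul_add_le_sum {j₀ : ι} (hu : ∀ j ∈ s, u j ≤ 1) (hw : ∀ j ∈ s, 0 ≤ w j)
    (hj₀ : j₀ ∈ s) (hu₀ : u j₀ ≤ 0) :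
    ∑ j ∈ s, u j * w j + w j₀ ≤ ∑ j ∈ s, w j := by
  have hdefect : w j₀ ≤ ∑ j ∈ s, (1 - u j) * w j :=
    calc w j₀ ≤ (1 - u j₀) * w j₀ := le_mul_of_one_le_left (hw j₀ hj₀) (by linarith)
      _ ≤ ∑ j ∈ s, (1 - u j) * w j :=
        single_le_sum (f := fun j => (1 - u j) * w j)
          (fun j hj => mul_nonneg (sub_nonneg.2 (hu j hj)) (hw j hj)) hj₀
  simp only [sub_mul, one_mul, sum_sub_distrib] at hdefect
  linarith

end SignedSum

theorem IsWeighingSeq.le_two_mul_sum_range_add_one {n m : ℕ} {w : ℕ → ℕ}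
    (hw : IsWeighingSeq n m w) {i : ℕ} (hi : i < m) :
    w i ≤ 2 * ∑ j ∈ range i, w j + 1 := by
  obtain ⟨-, hmono, hsum, hrep⟩ := hw
  by_contra! hgap
  set R : ℤ := ∑ j ∈ range i, (w j : ℤ)
  set N : ℤ := ∑ j ∈ Ico i m, (w j : ℤ)
  have hgap' : 2 * R + 2 ≤ w i := by unfold R; exact_mod_cast hgap
  have hR : 0 ≤ R := sum_nonneg fun j _ => by positivity
  have hRN : R + N = n := by rw [← hsum]; push_cast; exact sum_range_add_sum_Ico _ hi.le
  have hwiN : (w i : ℤ) ≤ N :=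
    single_le_sum (f := fun j => (w j : ℤ)) (fun j _ => by positivity) (mem_Ico.2 ⟨le_rfl, hi⟩)
  obtain ⟨u, hu, hk⟩ := hrep (N - R - 1) (by linarith) (by linarith)
  rw [← sum_range_add_sum_Ico _ hi.le] at hk
  have hunit : ∀ j, |u j| ≤ 1 := fun j => Int.abs_le_one_iff.2 (by have := hu j; tauto)
  have hhead := abs_le.1 <| abs_sum_mul_le_sum (range i) u (fun j => (w j : ℤ))
    (fun j _ => hunit j) (fun j _ => by positivity)
  obtain ⟨j, hj, huj⟩ : ∃ j ∈ Ico i m, u j ≤ 0 := by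
    by_contra! htail
    have hfull : ∑ j ∈ Ico i m, u j * (w j : ℤ) = N :=
      sum_congr rfl fun j hj => by
        rw [le_antisymm (abs_le.1 (hunit j)).2 (htail j hj), one_mul]
    linarith
  have hshort := sum_mul_add_le_sum (Ico i m) u (fun j => (w j : ℤ))
    (fun j _ => (abs_le.1 (hunit j)).2) (fun j _ => by positivity) hj huj
  have hwij : (w i : ℤ) ≤ w j := by
    exact_mod_cast hmono i j (mem_Ico.1 hj).1 (mem_Ico.1 hj).2
  linarith

theorem three_mul_part_le_general (n m : ℕ) (w : ℕ → ℕ)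
    (hw : IsWeighingSeq n m w) (i : ℕ) (hi : i < m) :
    3 * w i ≤ 2 * (∑ j ∈ Finset.range (i + 1), w j) + 1 := by
  have := hw.le_two_mul_sum_range_add_one hi
  rw [sum_range_succ]
  omega

/-- For any weighing sequence, `3 * w_i ≤ 2 * R_i + 1` where
`R_i = w_1 + … + w_i` (here `i` is 0-indexed, so `R_i` is the sum over
`Finset.range (i+1)`). -/
theorem three_mul_part_le (n m : ℕ) (w : ℕ → ℕ)
    (hn : 0 < n) (hw : IsWeighingSeq n m w) (i : ℕ) (hi : i < m) :
    3 * w i ≤ 2 * (∑ j ∈ Finset.range (i + 1), w j) + 1 :=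
  three_mul_part_le_general n m w hw i hi
end

section
/- Let m ≥ 2 and let n be an integer with (3^{m−1} + 1)/2 ≤ n ≤ (3^m − 1)/2 (so every feasible partition of n has m parts). Then there exists a feasible partition w_1 ≤ … ≤ w_m of n with R_{m−1} = w_1 + … + w_{m−1} = ⌈(n − 1)/3⌉; that is, the lower bound ⌈(n − 1)/3⌉ for R_{m−1} is attained. -/
/-- A feasible partition of `n`: a weighing sequence for `n` of minimal length. -/
def IsFeasible (n m : ℕ) (w : ℕ → ℕ) : Prop :=
  IsWeighingSeq n m w ∧ ∀ (m' : ℕ) (w' : ℕ → ℕ), IsWeighingSeq n m' w' → m ≤ m'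

/-!
Build the partial sums from the top: `R_m = n` and `R_i = ⌈(R_{i+1} - 1)/3⌉`, so that
`R_{m-1} = ⌈(n - 1)/3⌉`. The bounds on `n` propagate to `3^(i-1) < 2 R_i < 3^i`, hence
`R_0 = 0` and all weights `w_i = R_{i+1} - R_i` are positive; they are nondecreasing and
satisfy `w_i ≤ 2 R_i + 1`, which is exactly what is needed to represent every `|k| ≤ R_{i+1}`
by induction on `i`. No shorter sequence works, since `m'` weights give at most `3^m'`
signed sums while `-n, …, n` are `2n + 1` of them.
-/

open Finset

/-- The existential in the definition of `IsWeighingSeq`. -/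
def IsSignedSum (m : ℕ) (w : ℕ → ℕ) (k : ℤ) : Prop :=
  ∃ u : ℕ → ℤ, (∀ i, u i = -1 ∨ u i = 0 ∨ u i = 1) ∧ k = ∑ i ∈ range m, u i * (w i : ℤ)

namespace IsSignedSum

variable {m : ℕ} {w : ℕ → ℕ} {k : ℤ}

theorem zero : IsSignedSum m w 0 :=
  ⟨fun _ => 0, fun _ => Or.inr (Or.inl rfl), by simp⟩

theorem neg (h : IsSignedSum m w k) : IsSignedSum m w (-k) := by
  obtain ⟨u, hu, rfl⟩ := h
  refine ⟨fun i => -u i, fun i => ?_, by simp [sum_neg_distrib]⟩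
  rcases hu i with h | h | h <;> simp [h]

theorem succ (h : IsSignedSum m w k) {c : ℤ} (hc : c = -1 ∨ c = 0 ∨ c = 1) :
    IsSignedSum (m + 1) w (k + c * w m) := by
  obtain ⟨u, hu, rfl⟩ := h
  refine ⟨Function.update u m c, fun i => ?_, ?_⟩
  · rcases eq_or_ne i m with rfl | hi
    · simpa using hc
    · simpa [Function.update_of_ne hi] using hu i
  · rw [sum_range_succ, Function.update_self]
    congr 1
    refine sum_congr rfl fun i hi => ?_
    rw [Function.update_of_ne (mem_range.mp hi).ne]

end IsSignedSum

theorem isSignedSum_of_abs_le {w : ℕ → ℕ} :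
    ∀ {m : ℕ}, (∀ i < m, w i ≤ 2 * ∑ j ∈ range i, w j + 1) →
      ∀ {k : ℤ}, |k| ≤ ∑ j ∈ range m, (w j : ℤ) → IsSignedSum m w k
  | 0, _, k, hk => by
    obtain rfl : k = 0 := abs_nonpos_iff.mp (by simpa using hk)
    exact .zero
  | m + 1, hw, k, hk => by
    have hwm : (w m : ℤ) ≤ 2 * ∑ j ∈ range m, (w j : ℤ) + 1 := by
      exact_mod_cast hw m m.lt_succ_self
    set S := ∑ j ∈ range m, (w j : ℤ)
    rw [sum_range_succ] at hk
    obtain ⟨hk₁, hk₂⟩ := abs_le.mp hk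
    obtain ⟨c, hc, hkc⟩ : ∃ c : ℤ, (c = -1 ∨ c = 0 ∨ c = 1) ∧ |k - c * w m| ≤ S := by
      rcases lt_or_ge S k with h | h
      · exact ⟨1, by simp, abs_le.mpr ⟨by linarith, by linarith⟩⟩
      rcases lt_or_ge k (-S) with h' | h'
      · exact ⟨-1, by simp, abs_le.mpr ⟨by linarith, by linarith⟩⟩
      · exact ⟨0, by simp, abs_le.mpr ⟨by linarith, by linarith⟩⟩
    have := (isSignedSum_of_abs_le (fun i hi => hw i (by omega)) hkc).succ hc
    rwa [sub_add_cancel] at this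

theorem two_mul_add_one_le_three_pow {n m : ℕ} {w : ℕ → ℕ}
    (h : ∀ k : ℤ, 1 ≤ k → k ≤ n → IsSignedSum m w k) : 2 * n + 1 ≤ 3 ^ m := by
  classical
  let signs := Fintype.piFinset fun _ : Fin m => Icc (-1 : ℤ) 1
  let signedSum : (Fin m → ℤ) → ℤ := fun u => ∑ i, u i * (w i : ℤ)
  have hsub : Icc (-(n : ℤ)) n ⊆ signs.image signedSum := by
    intro k hk
    obtain ⟨u, hu, rfl⟩ : IsSignedSum m w k := by
      obtain ⟨hk₁, hk₂⟩ := mem_Icc.mp hk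
      rcases lt_trichotomy k 0 with hneg | rfl | hpos
      · simpa using (h (-k) (by omega) (by omega)).neg
      · exact .zero
      · exact h k hpos hk₂
    refine mem_image.mpr ⟨fun i => u i, Fintype.mem_piFinset.mpr fun i => ?_, ?_⟩
    · rcases hu i with h | h | h <;> simp [h]
    · exact Fin.sum_univ_eq_sum_range (fun i => u i * (w i : ℤ)) m
  calc 2 * n + 1 = #(Icc (-(n : ℤ)) n) := by simp; omega
    _ ≤ #(signs.image signedSum) := card_le_card hsub
    _ ≤ #signs := card_image_le
    _ = 3 ^ m := by simp [signs]

theorem IsWeighingSeq.isFeasible {n m : ℕ} {w : ℕ → ℕ} (hw : IsWeighingSeq n m w)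
    (hn : 3 ^ (m - 1) < 2 * n) : IsFeasible n m w := by
  refine ⟨hw, fun m' w' hw' => ?_⟩
  have := two_mul_add_one_le_three_pow (w := w') hw'.2.2.2
  have : m - 1 < m' := (Nat.pow_lt_pow_iff_right (a := 3) (by norm_num)).mp (by omega)
  omega

/-- `⌈(x - 1)/3⌉`, the least possible `R_{m-1}` of a weighing sequence for `x`. -/
def minPartialSum (x : ℕ) : ℕ := (x + 1) / 3

theorem minPartialSum_eq_ceil (x : ℕ) : (minPartialSum x : ℤ) = ⌈((x : ℚ) - 1) / 3⌉ := by
  have : ((x : ℚ) - 1) / 3 = ((x - 1 : ℤ) : ℚ) / ((3 : ℕ) : ℚ) := by push_cast; ring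
  rw [this, Rat.ceil_intCast_div_natCast, minPartialSum]
  omega

theorem minPartialSum_le (x : ℕ) : minPartialSum x ≤ x := by unfold minPartialSum; omega

theorem minPartialSum_lt {x : ℕ} (hx : 0 < x) : minPartialSum x < x := by
  unfold minPartialSum; omega

theorem sub_minPartialSum_le (x : ℕ) : x - minPartialSum x ≤ 2 * minPartialSum x + 1 := by
  unfold minPartialSum; omega

theorem minPartialSum_sub_minPartialSum_le (x : ℕ) :
    minPartialSum x - minPartialSum (minPartialSum x) ≤ x - minPartialSum x := by
  unfold minPartialSum; omega

-- Both bounds rely on `3 ^ j` being odd.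
theorem two_mul_iterate_minPartialSum_lt {x : ℕ} (j k : ℕ) (hx : 2 * x < 3 ^ (j + k)) :
    2 * minPartialSum^[k] x < 3 ^ j := by
  induction k generalizing x with
  | zero => simpa using hx
  | succ k ih =>
    rw [Function.iterate_succ_apply]
    refine ih ?_
    have hodd : 3 ^ (j + k) % 2 = 1 := Nat.odd_iff.mp (Odd.pow (by decide))
    rw [← add_assoc, pow_succ] at hx
    unfold minPartialSum; omega

theorem three_pow_lt_two_mul_iterate_minPartialSum {x : ℕ} (j k : ℕ)
    (hx : 3 ^ (j + k) < 2 * x) : 3 ^ j < 2 * minPartialSum^[k] x := by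
  induction k generalizing x with
  | zero => simpa using hx
  | succ k ih =>
    rw [Function.iterate_succ_apply]
    refine ih ?_
    have hodd : 3 ^ (j + k) % 2 = 1 := Nat.odd_iff.mp (Odd.pow (by decide))
    rw [← add_assoc, pow_succ] at hx
    unfold minPartialSum; omega

/-- The partial sums `R_i` of the extremal sequence (constantly `n` for `i ≥ m`). -/
def greedyPartialSum (n m i : ℕ) : ℕ := minPartialSum^[m - i] n

def greedyWeight (n m i : ℕ) : ℕ := greedyPartialSum n m (i + 1) - greedyPartialSum n m i

section Greedy

variable {n m : ℕ}

theorem greedyPartialSum_self : greedyPartialSum n m m = n := by simp [greedyPartialSum]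

theorem greedyPartialSum_eq {i : ℕ} (hi : i < m) :
    greedyPartialSum n m i = minPartialSum (greedyPartialSum n m (i + 1)) := by
  rw [greedyPartialSum, greedyPartialSum, show m - i = m - (i + 1) + 1 by omega,
    Function.iterate_succ_apply']

theorem monotone_greedyPartialSum : Monotone (greedyPartialSum n m) := by
  have : Antitone fun a => minPartialSum^[a] n := antitone_nat_of_succ_le fun a => by
    rw [Function.iterate_succ_apply']
    exact minPartialSum_le _
  exact fun i j hij => this (Nat.sub_le_sub_left hij m)

theorem greedyPartialSum_zero (hn : 2 * n < 3 ^ m) : greedyPartialSum n m 0 = 0 := by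
  have := two_mul_iterate_minPartialSum_lt (x := n) 0 m (by simpa using hn)
  simpa [greedyPartialSum] using this

theorem greedyPartialSum_pos (hn : 3 ^ (m - 1) < 2 * n) {i : ℕ} (hi : 0 < i) (him : i ≤ m) :
    0 < greedyPartialSum n m i := by
  have := three_pow_lt_two_mul_iterate_minPartialSum (x := n) (i - 1) (m - i)
    (by rwa [show i - 1 + (m - i) = m - 1 by omega])
  have := Nat.one_le_pow (i - 1) 3 (by norm_num)
  simp only [greedyPartialSum]
  omega

theorem sum_range_greedyWeight (hn : 2 * n < 3 ^ m) (i : ℕ) :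
    ∑ j ∈ range i, greedyWeight n m j = greedyPartialSum n m i := by
  rw [← Nat.sub_zero (greedyPartialSum n m i), ← greedyPartialSum_zero hn]
  exact sum_range_tsub monotone_greedyPartialSum i

theorem greedyWeight_pos (hn : 3 ^ (m - 1) < 2 * n) {i : ℕ} (hi : i < m) :
    0 < greedyWeight n m i := by
  rw [greedyWeight, greedyPartialSum_eq hi]
  have := minPartialSum_lt (greedyPartialSum_pos hn (by omega : 0 < i + 1) hi)
  omega

theorem greedyWeight_le_succ {i : ℕ} (hi : i + 1 < m) :
    greedyWeight n m i ≤ greedyWeight n m (i + 1) := by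
  rw [greedyWeight, greedyWeight, greedyPartialSum_eq (i := i) (by omega),
    greedyPartialSum_eq hi]
  exact minPartialSum_sub_minPartialSum_le _

theorem greedyWeight_le_two_mul_add_one {i : ℕ} (hi : i < m) :
    greedyWeight n m i ≤ 2 * greedyPartialSum n m i + 1 := by
  rw [greedyWeight, greedyPartialSum_eq hi]
  exact sub_minPartialSum_le _

theorem isWeighingSeq_greedyWeight (h₁ : 3 ^ (m - 1) < 2 * n) (h₂ : 2 * n < 3 ^ m) :
    IsWeighingSeq n m (greedyWeight n m) := by
  have hsum := sum_range_greedyWeight h₂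
  refine ⟨fun i => greedyWeight_pos h₁, fun i j hij hj => ?_, ?_, fun k hk₁ hk₂ => ?_⟩
  · induction j, hij using Nat.le_induction with
    | base => exact le_rfl
    | succ j _ ih => exact (ih (by omega)).trans (greedyWeight_le_succ hj)
  · rw [hsum, greedyPartialSum_self]
  · refine isSignedSum_of_abs_le (fun i hi => ?_) ?_
    · rw [hsum]
      exact greedyWeight_le_two_mul_add_one hi
    · rw [← Nat.cast_sum, hsum, greedyPartialSum_self, abs_le]
      omega

end Greedy

theorem exists_feasible_with_min_penultimate_sum_general (m n : ℕ)
    (h1 : 3 ^ (m - 1) + 1 ≤ 2 * n) (h2 : 2 * n ≤ 3 ^ m - 1) :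
    ∃ w : ℕ → ℕ, IsFeasible n m w ∧
      ((∑ j ∈ Finset.range (m - 1), w j : ℕ) : ℤ) = ⌈((n : ℚ) - 1) / 3⌉ := by
  have h₁ : 3 ^ (m - 1) < 2 * n := by omega
  have h₂ : 2 * n < 3 ^ m := by have := Nat.one_le_pow m 3 (by norm_num); omega
  have hm : 1 ≤ m := Nat.pos_of_ne_zero (by rintro rfl; simp at h₁ h₂; omega)
  refine ⟨greedyWeight n m, (isWeighingSeq_greedyWeight h₁ h₂).isFeasible h₁, ?_⟩
  rw [sum_range_greedyWeight h₂, greedyPartialSum_eq (by omega), Nat.sub_add_cancel hm,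
    greedyPartialSum_self, minPartialSum_eq_ceil]

/-- For `m ≥ 2` and `(3^(m-1) + 1)/2 ≤ n ≤ (3^m - 1)/2` (stated doubled),
there is a feasible partition of `n` (with `m` parts) attaining the lower
bound `R_(m-1) = ⌈(n - 1) / 3⌉`. -/
theorem exists_feasible_with_min_penultimate_sum (m n : ℕ) (hm : 2 ≤ m)
    (h1 : 3 ^ (m - 1) + 1 ≤ 2 * n) (h2 : 2 * n ≤ 3 ^ m - 1) :
    ∃ w : ℕ → ℕ, IsFeasible n m w ∧
      ((∑ j ∈ Finset.range (m - 1), w j : ℕ) : ℤ) = ⌈((n : ℚ) - 1) / 3⌉ :=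
  exists_feasible_with_min_penultimate_sum_general m n h1 h2
end
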